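/- Let ν be the standard Gaussian measure on ℝ and A a nonempty finite union of intervals with ν(A) > 0. If p > ν(A), then either 0 < I_A(p) < ∞, or I_A(p) = ∞ and J_A(p) ∈ (0,1), where I_A(p) = inf{|x| : ν(A-x) ≥ p} and J_A(p) = inf{y ∈ [0,1] : sup_x ν((A-x)/√(1-y)) ≥ p}. -/

import Mathlib

/-!
Write `f x = ν (A - x) = N(x, 1)(A)`. Every set in the algebra generated by half-lines has a null
frontier, which makes `f` continuous, and either contains or avoids a neighbourhood of `+∞`, and
likewise of `-∞`; so it is either bounded or contains a half-line.

If `ν (A - x) ≥ p` for some `x`, continuity of `f` at `0`, where `f 0 = ν A < p`, keeps all such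
`x` away from `0`. Otherwise `A` cannot contain a half-line (it would contain balls of every
radius), so it is bounded, `f` vanishes at infinity and attains a maximum `q < p`. For `s ≤ 1`
the Gaussian densities satisfy `φ_{s²} ≤ s⁻¹ φ₁`, so `ν ((A - x) / s) ≤ q / s`, which is `< p`
unless `s ≤ q / p`: this bounds `J_A(p)` below by `1 - (q / p)² > 0`. Finally `A` has positive
measure and null frontier, so it contains an interval `(z - r, z + r)`, and
`ν ((A - z) / s) ≥ ν (-r / s, r / s) → 1` as `s → 0`, whence `J_A(p) < 1`.
-/

open MeasureTheory ProbabilityTheory Set Filter Topology Metric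
open scoped NNReal

section

variable {α : Type*}

lemma isSetAlgebra_setOf_measurableSet [MeasurableSpace α] :
    IsSetAlgebra {s : Set α | MeasurableSet s} where
  empty_mem := .empty
  compl_mem _ hs := hs.compl
  union_mem _ _ hs ht := hs.union ht

lemma isSetAlgebra_setOf_measure_frontier_eq_zero [TopologicalSpace α] [MeasurableSpace α]
    (μ : Measure α) : IsSetAlgebra {s : Set α | μ (frontier s) = 0} where
  empty_mem := by simp
  compl_mem s hs := by rwa [mem_ofPred_eq, frontier_compl]
  union_mem s t hs ht := measure_mono_null
    ((frontier_union_subset s t).trans (union_subset_union inter_subset_left inter_subset_right))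
    (measure_union_null hs ht)

lemma isSetAlgebra_setOf_eventually_mem_or_eventually_notMem (l : Filter α) :
    IsSetAlgebra {s : Set α | (∀ᶠ x in l, x ∈ s) ∨ ∀ᶠ x in l, x ∉ s} where
  empty_mem := Or.inr (by simp)
  compl_mem s hs := by simpa only [mem_ofPred_eq, mem_compl_iff, not_not, or_comm] using hs
  union_mem s t hs ht := by
    rcases hs with hs | hs
    · exact Or.inl (hs.mono fun x hx => Or.inl hx)
    rcases ht with ht | ht
    · exact Or.inl (ht.mono fun x hx => Or.inr hx)
    exact Or.inr ((hs.and ht).mono fun x hx => by simpa [not_or] using hx)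

lemma interior_nonempty_of_measure_frontier_eq_zero [TopologicalSpace α] [MeasurableSpace α]
    {μ : Measure α} {A : Set α} (hfr : μ (frontier A) = 0) (hA : μ A ≠ 0) :
    (interior A).Nonempty := by
  by_contra h
  rw [not_nonempty_iff_eq_empty] at h
  refine hA (measure_mono_null (fun x hx => ?_) hfr)
  rw [frontier, h, sdiff_empty]
  exact subset_closure hx

lemma tendsto_measureReal_ball_atTop [PseudoMetricSpace α] [MeasurableSpace α]
    (μ : Measure α) [IsFiniteMeasure μ] (x : α) :
    Tendsto (fun R : ℝ => μ.real (ball x R)) atTop (𝓝 (μ.real univ)) := by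
  have hunion : (⋃ R : ℝ, ball x R) = univ :=
    iUnion_eq_univ_iff.2 fun y => ⟨dist y x + 1, mem_ball.2 (lt_add_one _)⟩
  rw [← hunion]
  exact (ENNReal.tendsto_toReal (measure_ne_top μ _)).comp
    (tendsto_measure_iUnion_atTop fun _ _ h => ball_subset_ball h)

end

lemma exists_Ici_subset_or_Iic_subset_of_not_isBounded {A : Set ℝ}
    (hA : A ∈ generateSetAlgebra {s : Set ℝ | ∃ x, s = Iic x})
    (hA' : ¬ Bornology.IsBounded A) :
    ∃ a, Ici a ⊆ A ∨ Iic a ⊆ A := by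
  have decided (l : Filter ℝ)
      (hl : ∀ x, (∀ᶠ y in l, y ∈ Iic x) ∨ ∀ᶠ y in l, y ∉ Iic x) :=
    (isSetAlgebra_setOf_eventually_mem_or_eventually_notMem l).generateSetAlgebra_subset
      (by rintro _ ⟨x, rfl⟩; exact hl x) hA
  rcases decided atTop fun x => Or.inr ((eventually_gt_atTop x).mono fun y hy => not_le.2 hy)
    with htop | htop
  · obtain ⟨a, ha⟩ := eventually_atTop.1 htop
    exact ⟨a, Or.inl ha⟩
  rcases decided atBot fun x => Or.inl (eventually_le_atBot x) with hbot | hbot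
  · obtain ⟨a, ha⟩ := eventually_atBot.1 hbot
    exact ⟨a, Or.inr ha⟩
  obtain ⟨a, ha⟩ := eventually_atTop.1 htop
  obtain ⟨b, hb⟩ := eventually_atBot.1 hbot
  refine absurd ((Metric.isBounded_Icc b a).subset fun x hx => ⟨?_, ?_⟩) hA'
  · by_contra h; exact hb x (not_le.1 h).le hx
  · by_contra h; exact ha x (not_le.1 h).le hx

lemma measurableSet_of_mem_generateSetAlgebra_Iic {A : Set ℝ}
    (hA : A ∈ generateSetAlgebra {s : Set ℝ | ∃ x, s = Iic x}) : MeasurableSet A := by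
  refine isSetAlgebra_setOf_measurableSet.generateSetAlgebra_subset ?_ hA
  rintro _ ⟨x, rfl⟩
  exact (measurableSet_Iic : MeasurableSet (Iic x))

lemma volume_frontier_eq_zero_of_mem_generateSetAlgebra_Iic {A : Set ℝ}
    (hA : A ∈ generateSetAlgebra {s : Set ℝ | ∃ x, s = Iic x}) : volume (frontier A) = 0 := by
  refine (isSetAlgebra_setOf_measure_frontier_eq_zero volume).generateSetAlgebra_subset ?_ hA
  rintro _ ⟨x, rfl⟩
  simp

lemma exists_lt_measureReal_image_sub_of_not_isBounded (μ : Measure ℝ) [IsProbabilityMeasure μ]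
    {A : Set ℝ} (hA : A ∈ generateSetAlgebra {s : Set ℝ | ∃ x, s = Iic x})
    (hA' : ¬ Bornology.IsBounded A) {p : ℝ} (hp : p < 1) :
    ∃ x, p < μ.real ((· - x) '' A) := by
  obtain ⟨R, hR⟩ := ((tendsto_measureReal_ball_atTop μ 0).eventually_const_lt
    (by simpa using hp)).exists
  have hball (x : ℝ) (hx : ball x R ⊆ A) : p < μ.real ((· - x) '' A) :=
    hR.trans_le <| measureReal_mono fun t ht =>
      ⟨t + x, hx (by simpa [Real.dist_eq] using ht), add_sub_cancel_right t x⟩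
  obtain ⟨a, ha | ha⟩ := exists_Ici_subset_or_Iic_subset_of_not_isBounded hA hA'
  · refine ⟨a + R, hball _ fun t ht => ha ?_⟩
    rw [Real.ball_eq_Ioo] at ht
    exact mem_Ici.2 (by linarith [ht.1])
  · refine ⟨a - R, hball _ fun t ht => ha ?_⟩
    rw [Real.ball_eq_Ioo] at ht
    exact mem_Iic.2 (by linarith [ht.2])

lemma tendsto_measureReal_image_sub_cocompact (μ : Measure ℝ) [IsFiniteMeasure μ] {A : Set ℝ}
    (hA : Bornology.IsBounded A) :
    Tendsto (fun x => μ.real ((· - x) '' A)) (cocompact ℝ) (𝓝 0) := by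
  obtain ⟨M, hM⟩ := hA.subset_closedBall 0
  refine tendsto_order.2
    ⟨fun ε hε => Eventually.of_forall fun x => hε.trans_le measureReal_nonneg, fun ε hε => ?_⟩
  obtain ⟨R, hR⟩ := ((tendsto_measureReal_ball_atTop μ 0).eventually_const_lt
    (sub_lt_self _ hε)).exists
  filter_upwards [(isCompact_closedBall (0 : ℝ) (M + R)).compl_mem_cocompact] with x hx
  have hdisj : (· - x) '' A ⊆ (ball 0 R)ᶜ := by
    rintro _ ⟨a, ha, rfl⟩ hball
    have ha' := hM ha
    simp only [mem_compl_iff, mem_ball, mem_closedBall, dist_zero_right, Real.norm_eq_abs,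
      not_le] at ha' hball hx
    linarith [abs_sub_abs_le_abs_sub x a, abs_sub_comm x a]
  calc μ.real ((· - x) '' A) ≤ μ.real (ball 0 R)ᶜ := measureReal_mono hdisj
    _ = μ.real univ - μ.real (ball 0 R) := measureReal_compl measurableSet_ball
    _ < ε := by linarith

lemma gaussianReal_image_sub_div (x : ℝ) {s : ℝ} (hs : s ≠ 0) {A : Set ℝ}
    (hA : MeasurableSet A) :
    gaussianReal 0 1 ((fun z => (z - x) / s) '' A) = gaussianReal x ⟨s ^ 2, sq_nonneg s⟩ A := by
  have himage : (fun z => (z - x) / s) '' A = (fun w => s * w + x) ⁻¹' A :=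
    congrFun (image_eq_preimage_of_inverse (f := fun z => (z - x) / s) (g := fun w => s * w + x)
      (fun z => by field_simp; ring) (fun w => by field_simp; ring)) A
  have hmap :
      (gaussianReal 0 1).map (fun w => s * w + x) = gaussianReal x ⟨s ^ 2, sq_nonneg s⟩ := by
    rw [show (fun w => s * w + x) = (· + x) ∘ (s * ·) from rfl,
      ← Measure.map_map (by fun_prop) (by fun_prop), gaussianReal_map_const_mul,
      gaussianReal_map_add_const, mul_zero, zero_add, mul_one]
    rfl
  rw [himage, ← Measure.map_apply (by fun_prop) hA, hmap]

lemma gaussianReal_real_image_sub (x : ℝ) {A : Set ℝ} (hA : MeasurableSet A) :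
    (gaussianReal 0 1).real ((fun y => y - x) '' A) = (gaussianReal x 1).real A := by
  have h := gaussianReal_image_sub_div x one_ne_zero hA
  simp only [div_one, one_pow] at h
  rw [measureReal_def, h]
  rfl

lemma gaussianPDFReal_le_mul_gaussianPDFReal (μ : ℝ) {v w : ℝ≥0} (hv : v ≠ 0) (hvw : v ≤ w)
    (t : ℝ) : gaussianPDFReal μ v t ≤ √(w / v) * gaussianPDFReal μ w t := by
  have hv0 : (0 : ℝ) < v := by positivity
  have hw0 : (0 : ℝ) < w := hv0.trans_le hvw
  have hconst : √(w / v) * (√(2 * Real.pi * w))⁻¹ = (√(2 * Real.pi * v))⁻¹ := by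
    rw [Real.sqrt_div hw0.le, Real.sqrt_mul (by positivity : (0 : ℝ) ≤ 2 * Real.pi) w,
      Real.sqrt_mul (by positivity : (0 : ℝ) ≤ 2 * Real.pi) v]
    field_simp
  rw [gaussianPDFReal, gaussianPDFReal, ← mul_assoc, hconst]
  refine mul_le_mul_of_nonneg_left (Real.exp_le_exp.2 ?_) (by positivity)
  rw [neg_div, neg_div, neg_le_neg_iff]
  exact div_le_div_of_nonneg_left (sq_nonneg _) (by positivity) (by gcongr)

lemma gaussianReal_le_smul_gaussianReal (μ : ℝ) {v w : ℝ≥0} (hv : v ≠ 0) (hvw : v ≤ w) :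
    gaussianReal μ v ≤ NNReal.sqrt (w / v) • gaussianReal μ w := by
  have hw : w ≠ 0 := (pos_iff_ne_zero.2 hv |>.trans_le hvw).ne'
  rw [gaussianReal_of_var_ne_zero _ hv, gaussianReal_of_var_ne_zero _ hw,
    ← Measure.coe_nnreal_smul, ← withDensity_smul' _ _ ENNReal.coe_ne_top]
  refine withDensity_mono (ae_of_all _ fun t => ?_)
  simp only [gaussianPDF, Pi.smul_apply, smul_eq_mul]
  rw [← ENNReal.ofReal_coe_nnreal, ← ENNReal.ofReal_mul (by positivity)]
  refine ENNReal.ofReal_le_ofReal ?_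
  simpa using gaussianPDFReal_le_mul_gaussianPDFReal μ hv hvw t

lemma gaussianReal_real_apply_le (μ : ℝ) {v w : ℝ≥0} (hv : v ≠ 0) (hvw : v ≤ w)
    (A : Set ℝ) :
    (gaussianReal μ v).real A ≤ √(w / v) * (gaussianReal μ w).real A := by
  have h := gaussianReal_le_smul_gaussianReal μ hv hvw A
  rw [Measure.smul_apply, ENNReal.smul_def, smul_eq_mul] at h
  simpa [measureReal_def, ENNReal.toReal_mul] using
    ENNReal.toReal_mono (ENNReal.mul_ne_top ENNReal.coe_ne_top (measure_ne_top _ _)) h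

lemma continuous_gaussianReal_real_apply {v : ℝ≥0} (hv : v ≠ 0) {A : Set ℝ}
    (hA : MeasurableSet A) (hfr : volume (frontier A) = 0) :
    Continuous fun x => (gaussianReal x v).real A := by
  have hint (x : ℝ) :
      (gaussianReal x v).real A = ∫ t, A.indicator 1 (t + x) ∂gaussianReal 0 v := by
    have hmap : gaussianReal x v = (gaussianReal 0 v).map (· + x) := by
      rw [gaussianReal_map_add_const, zero_add]
    rw [← integral_indicator_one hA, hmap, integral_map (by fun_prop) (by fun_prop)]
  simp only [hint]
  refine continuous_iff_continuousAt.2 fun x₀ => continuousAt_of_dominated (bound := 1)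
    (Eventually.of_forall fun x => ?_) (Eventually.of_forall fun x => ae_of_all _ fun t => ?_)
    (integrable_const 1) ?_
  · exact ((measurable_one.indicator hA).comp (measurable_add_const x)).aestronglyMeasurable
  · simpa using norm_indicator_le_norm_self (1 : ℝ → ℝ) (t + x)
  · have hnull : volume ((· + x₀) ⁻¹' frontier A) = 0 := by
      rwa [measure_preimage_add_right]
    filter_upwards [(gaussianReal_absolutelyContinuous 0 hv).ae_le
      (measure_eq_zero_iff_ae_notMem.1 hnull)] with t ht
    exact (continuousOn_const.continuousAt_indicator ht).comp (by fun_prop)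

lemma sInf_image_abs_pos_of_continuousAt {f : ℝ → ℝ} {p : ℝ} (hf : ContinuousAt f 0)
    (h0 : f 0 < p) (hS : {x | p ≤ f x}.Nonempty) :
    0 < sInf ((fun x => |x|) '' {x | p ≤ f x}) := by
  obtain ⟨ε, hε, hball⟩ := Metric.eventually_nhds_iff.1 (hf.eventually_lt_const h0)
  refine hε.trans_le (le_csInf (hS.image _) ?_)
  rintro _ ⟨x, hx, rfl⟩
  by_contra! hlt
  exact (hball (by rwa [Real.dist_eq, sub_zero])).not_ge hx

lemma exists_mem_Ico_le_sSup_measureReal_image_sub_div (μ : Measure ℝ) [IsProbabilityMeasure μ]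
    {A : Set ℝ} {z r p : ℝ} (hA : ball z r ⊆ A) (hr : 0 < r) (hp : p < 1) :
    ∃ y ∈ Ico (0 : ℝ) 1,
      p ≤ sSup (range fun x => μ.real ((fun w => (w - x) / √(1 - y)) '' A)) := by
  obtain ⟨R, hRp, hRr⟩ := (((tendsto_measureReal_ball_atTop μ 0).eventually_const_lt
    (by simpa using hp)).and (eventually_ge_atTop r)).exists
  have hR : 0 < R := hr.trans_le hRr
  set s := r / R with hs
  have hs0 : 0 < s := div_pos hr hR
  have hs1 : s ≤ 1 := (div_le_one hR).2 hRr
  have hsqrt : √(1 - (1 - s ^ 2)) = s := by rw [sub_sub_cancel, Real.sqrt_sq hs0.le]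
  have hsub : ball 0 R ⊆ (fun w => (w - z) / s) '' A := by
    refine fun t ht => ⟨s * t + z, hA ?_, by field_simp; ring⟩
    rw [mem_ball, Real.dist_eq, add_sub_cancel_right, abs_mul, abs_of_pos hs0]
    rw [mem_ball, Real.dist_eq, sub_zero] at ht
    calc s * |t| < s * R := by gcongr
      _ = r := by rw [hs]; field_simp
  refine ⟨1 - s ^ 2, ⟨by nlinarith, by nlinarith⟩, hRp.le.trans ?_⟩
  refine (measureReal_mono hsub).trans (le_csSup ⟨1, ?_⟩ ⟨z, by simp only [hsqrt]⟩)
  rintro _ ⟨x, rfl⟩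
  exact measureReal_le_one

lemma one_sub_div_sq_le_of_le_sSup_gaussianReal_real_image_sub_div {A : Set ℝ}
    (hA : MeasurableSet A) {p q : ℝ} (hq : ∀ x, (gaussianReal x 1).real A ≤ q) (hq0 : 0 ≤ q)
    (hqp : q < p) {y : ℝ} (hy : y ∈ Icc (0 : ℝ) 1)
    (hyp : p ≤ sSup (range fun x =>
      (gaussianReal 0 1).real ((fun z => (z - x) / √(1 - y)) '' A))) :
    1 - (q / p) ^ 2 ≤ y := by
  rcases hy.2.eq_or_lt with rfl | hy1
  · exact sub_le_self _ (sq_nonneg _)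
  set s := √(1 - y) with hs
  have hs0 : 0 < s := Real.sqrt_pos.2 (by linarith)
  have hp0 : 0 < p := hq0.trans_lt hqp
  have hbound (x : ℝ) : (gaussianReal 0 1).real ((fun z => (z - x) / s) '' A) ≤ q / s := by
    have hv : (⟨s ^ 2, sq_nonneg s⟩ : ℝ≥0) ≠ 0 := fun h =>
      pow_ne_zero 2 hs0.ne' (congrArg NNReal.toReal h)
    have hv1 : (⟨s ^ 2, sq_nonneg s⟩ : ℝ≥0) ≤ 1 := by
      show s ^ 2 ≤ 1
      rw [hs, Real.sq_sqrt (by linarith)]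
      linarith [hy.1]
    have hsqrt : √((1 : ℝ≥0) / (⟨s ^ 2, sq_nonneg s⟩ : ℝ≥0) : ℝ) = s⁻¹ := by
      simp [Real.sqrt_inv, Real.sqrt_sq hs0.le]
    calc (gaussianReal 0 1).real ((fun z => (z - x) / s) '' A)
        = (gaussianReal x ⟨s ^ 2, sq_nonneg s⟩).real A := by
          rw [measureReal_def, gaussianReal_image_sub_div x hs0.ne' hA, measureReal_def]
      _ ≤ s⁻¹ * (gaussianReal x 1).real A := hsqrt ▸ gaussianReal_real_apply_le x hv hv1 A
      _ ≤ q / s := by rw [inv_mul_eq_div]; gcongr; exact hq x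
  have hsq : s ≤ q / p := by
    rw [le_div_iff₀ hp0, mul_comm, ← le_div_iff₀ hs0]
    exact hyp.trans (csSup_le (range_nonempty _) (forall_mem_range.2 hbound))
  have : s ^ 2 ≤ (q / p) ^ 2 := by gcongr
  rw [hs, Real.sq_sqrt (by linarith)] at this
  linarith

lemma exists_lt_forall_gaussianReal_real_apply_le {A : Set ℝ}
    (hA : A ∈ generateSetAlgebra {s : Set ℝ | ∃ x, s = Iic x}) (hAm : MeasurableSet A)
    (hfr : volume (frontier A) = 0) (hν : 0 < (gaussianReal 0 1).real A) {p : ℝ} (hp : p < 1)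
    (hlt : ∀ x, (gaussianReal x 1).real A < p) :
    ∃ q, 0 ≤ q ∧ q < p ∧ ∀ x, (gaussianReal x 1).real A ≤ q := by
  have hbdd : Bornology.IsBounded A := by
    by_contra hunb
    obtain ⟨x, hx⟩ :=
      exists_lt_measureReal_image_sub_of_not_isBounded (gaussianReal 0 1) hA hunb hp
    exact (hlt x).not_gt (gaussianReal_real_image_sub x hAm ▸ hx)
  have hvanish := (tendsto_measureReal_image_sub_cocompact (gaussianReal 0 1) hbdd).eventually
    (ge_mem_nhds hν)
  simp only [gaussianReal_real_image_sub _ hAm] at hvanish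
  obtain ⟨x₀, hx₀⟩ :=
    (continuous_gaussianReal_real_apply one_ne_zero hAm hfr).exists_forall_ge' 0 hvanish
  exact ⟨_, measureReal_nonneg, hlt x₀, hx₀⟩

lemma sInf_setOf_le_sSup_gaussianReal_real_image_sub_div_mem_Ioo {A : Set ℝ}
    (hA : MeasurableSet A) (hfr : volume (frontier A) = 0) (hν : 0 < (gaussianReal 0 1).real A)
    {p q : ℝ} (hq : ∀ x, (gaussianReal x 1).real A ≤ q) (hq0 : 0 ≤ q) (hqp : q < p)
    (hp : p < 1) :
    sInf {y : ℝ | y ∈ Icc (0 : ℝ) 1 ∧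
      p ≤ sSup (range fun x => (gaussianReal 0 1).real ((fun z => (z - x) / √(1 - y)) '' A))}
      ∈ Ioo (0 : ℝ) 1 := by
  obtain ⟨z, hz⟩ := interior_nonempty_of_measure_frontier_eq_zero hfr fun h => hν.ne' <| by
    rw [measureReal_def, gaussianReal_absolutelyContinuous 0 one_ne_zero h, ENNReal.toReal_zero]
  obtain ⟨r, hr, hball⟩ := Metric.isOpen_iff.1 isOpen_interior z hz
  obtain ⟨y₀, hy₀, hy₀p⟩ := exists_mem_Ico_le_sSup_measureReal_image_sub_div
    (gaussianReal 0 1) (hball.trans interior_subset) hr hp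
  set T := {y : ℝ | y ∈ Icc (0 : ℝ) 1 ∧
    p ≤ sSup (range fun x => (gaussianReal 0 1).real ((fun z => (z - x) / √(1 - y)) '' A))}
  have hy₀T : y₀ ∈ T := ⟨Ico_subset_Icc_self hy₀, hy₀p⟩
  have hlow (y : ℝ) (hy : y ∈ T) : 1 - (q / p) ^ 2 ≤ y :=
    one_sub_div_sq_le_of_le_sSup_gaussianReal_real_image_sub_div hA hq hq0 hqp hy.1 hy.2
  have hδ : 0 < 1 - (q / p) ^ 2 := by
    have : q / p < 1 := (div_lt_one (hq0.trans_lt hqp)).2 hqp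
    nlinarith [div_nonneg hq0 (hq0.trans hqp.le)]
  exact ⟨hδ.trans_le (le_csInf ⟨y₀, hy₀T⟩ hlow),
    (csInf_le ⟨0, fun y hy => hy.1.1⟩ hy₀T).trans_lt hy₀.2⟩

theorem IA_or_JA_general
    (A : Set ℝ)
    (hA : A ∈ MeasureTheory.generateSetAlgebra {s : Set ℝ | ∃ x, s = Set.Iic x})
    (hν : 0 < ((gaussianReal 0 1) A).toReal)
    (p : ℝ) (hp : ((gaussianReal 0 1) A).toReal < p) (hp1 : p < 1) :
    ({x : ℝ | p ≤ ((gaussianReal 0 1) ((fun y => y - x) '' A)).toReal}.Nonempty ∧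
      0 < sInf ((fun x => |x|) ''
        {x : ℝ | p ≤ ((gaussianReal 0 1) ((fun y => y - x) '' A)).toReal})) ∨
    ({x : ℝ | p ≤ ((gaussianReal 0 1) ((fun y => y - x) '' A)).toReal} = ∅ ∧
      sInf {y : ℝ | y ∈ Set.Icc (0:ℝ) 1 ∧
        p ≤ sSup (Set.range (fun x : ℝ =>
          ((gaussianReal 0 1)
            ((fun z => (z - x) / Real.sqrt (1 - y)) '' A)).toReal))}
        ∈ Set.Ioo (0:ℝ) 1) := by
  have hAm := measurableSet_of_mem_generateSetAlgebra_Iic hA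
  have hfr := volume_frontier_eq_zero_of_mem_generateSetAlgebra_Iic hA
  simp only [← measureReal_def, gaussianReal_real_image_sub _ hAm] at hν hp ⊢
  rcases eq_empty_or_nonempty {x | p ≤ (gaussianReal x 1).real A} with hS | hS
  · obtain ⟨q, hq0, hqp, hq⟩ := exists_lt_forall_gaussianReal_real_apply_le hA hAm hfr hν hp1
      fun x => not_le.1 fun h => hS.subset h
    exact Or.inr ⟨hS, sInf_setOf_le_sSup_gaussianReal_real_image_sub_div_mem_Ioo hAm hfr hν hq
      hq0 hqp hp1⟩
  · exact Or.inl ⟨hS, sInf_image_abs_pos_of_continuousAt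
      (continuous_gaussianReal_real_apply one_ne_zero hAm hfr).continuousAt hp hS⟩

theorem IA_or_JA
    (A : Set ℝ)
    (hA : A ∈ MeasureTheory.generateSetAlgebra {s : Set ℝ | ∃ x, s = Set.Iic x})
    (hAne : A.Nonempty)
    (hν : 0 < ((gaussianReal 0 1) A).toReal)
    (p : ℝ) (hp : ((gaussianReal 0 1) A).toReal < p) (hp1 : p < 1) :
    ({x : ℝ | p ≤ ((gaussianReal 0 1) ((fun y => y - x) '' A)).toReal}.Nonempty ∧
      0 < sInf ((fun x => |x|) ''
        {x : ℝ | p ≤ ((gaussianReal 0 1) ((fun y => y - x) '' A)).toReal})) ∨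
    ({x : ℝ | p ≤ ((gaussianReal 0 1) ((fun y => y - x) '' A)).toReal} = ∅ ∧
      sInf {y : ℝ | y ∈ Set.Icc (0:ℝ) 1 ∧
        p ≤ sSup (Set.range (fun x : ℝ =>
          ((gaussianReal 0 1)
            ((fun z => (z - x) / Real.sqrt (1 - y)) '' A)).toReal))}
        ∈ Set.Ioo (0:ℝ) 1) :=
  IA_or_JA_general A hA hν p hp hp1
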